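/- For positive reals α*, β*, h with |h| < β*, the limit as δ → 0⁺ of (1/(2π))·∫_{π−δ^{1/3}}^{π+δ^{1/3}} [1/(δh − √(δ²β*² + α*²(p−π)²)) + 1/(δh + √(δ²β*² + α*²(p−π)²))] dp equals −(1/(β*·α*))·h/√(1 − (h/β*)²). -/

import Mathlib

open Real Filter Topology

/-! Rationalizing, the two resonance terms add up to the Lorentzian
`-2δh / (α*² (p - π)² + δ² c²)` with `c = √(β*² - h²)`, whose integral over the window of
half-width `δ^(1/3)` is an arctangent: the normalized integral equals
`-(2h / (π α* c)) · arctan (α* δ^(1/3) / (δ c))`. Since `δ^(1/3) / δ → ∞`, the arctangent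
tends to `π / 2`. -/

theorem one_div_sub_add_one_div_add {K : Type*} [Field K] {t s : K} (h : t ^ 2 ≠ s ^ 2) :
    1 / (t - s) + 1 / (t + s) = 2 * t / (t ^ 2 - s ^ 2) := by
  have hprod : (t + s) * (t - s) ≠ 0 := by
    rw [← sq_sub_sq]; exact sub_ne_zero.2 h
  have hadd := left_ne_zero_of_mul hprod
  have hsub := right_ne_zero_of_mul hprod
  rw [sq_sub_sq]
  field_simp
  ring

theorem integral_inv_sq_mul_sq_add_sq {a b : ℝ} (ha : a ≠ 0) (hb : b ≠ 0) (L R : ℝ) :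
    ∫ x in L..R, (a ^ 2 * x ^ 2 + b ^ 2)⁻¹ =
      (arctan (a * R / b) - arctan (a * L / b)) / (a * b) := by
  have hderiv : ∀ x ∈ Set.uIcc L R,
      HasDerivAt (fun x => arctan (a * x / b) / (a * b)) (a ^ 2 * x ^ 2 + b ^ 2)⁻¹ x := by
    intro x _
    have hlin : HasDerivAt (fun x => a * x / b) (a / b) x := by
      simpa using ((hasDerivAt_id x).const_mul a).div_const b
    refine ((hasDerivAt_arctan _).comp x hlin |>.div_const (a * b)).congr_deriv ?_
    field_simp
    ring
  have hint : IntervalIntegrable (fun x => (a ^ 2 * x ^ 2 + b ^ 2)⁻¹) MeasureTheory.volume L R :=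
    (Continuous.inv₀ (by fun_prop) fun x => by positivity).intervalIntegrable L R
  rw [intervalIntegral.integral_eq_sub_of_hasDerivAt hderiv hint, sub_div]

theorem tendsto_rpow_div_self_nhdsGT_zero {r : ℝ} (hr : r < 1) :
    Tendsto (fun x : ℝ => x ^ r / x) (𝓝[>] 0) atTop := by
  refine (tendsto_rpow_neg_nhdsGT_zero (sub_neg.2 hr)).congr' ?_
  filter_upwards [self_mem_nhdsWithin] with x hx
  rw [rpow_sub_one hx.ne']

noncomputable def resonanceIntegrand (α β h δ x : ℝ) : ℝ :=
  1 / (δ * h - √(δ ^ 2 * β ^ 2 + α ^ 2 * x ^ 2)) +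
    1 / (δ * h + √(δ ^ 2 * β ^ 2 + α ^ 2 * x ^ 2))

section
variable {α β h δ c : ℝ}

theorem resonanceIntegrand_eq_mul_inv (hδ : δ ≠ 0) (hc : c ≠ 0) (hc2 : c ^ 2 = β ^ 2 - h ^ 2)
    (x : ℝ) :
    resonanceIntegrand α β h δ x = -(2 * δ * h) * (α ^ 2 * x ^ 2 + (δ * c) ^ 2)⁻¹ := by
  have hden : (δ * h) ^ 2 - √(δ ^ 2 * β ^ 2 + α ^ 2 * x ^ 2) ^ 2
      = -(α ^ 2 * x ^ 2 + (δ * c) ^ 2) := by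
    rw [sq_sqrt (by positivity)]; linear_combination δ ^ 2 * hc2
  have hpos : 0 < α ^ 2 * x ^ 2 + (δ * c) ^ 2 := by positivity
  rw [resonanceIntegrand, one_div_sub_add_one_div_add (sub_ne_zero.1 (hden ▸ by linarith)), hden]
  field_simp

theorem integral_resonanceIntegrand (hα : α ≠ 0) (hδ : δ ≠ 0) (hc : c ≠ 0)
    (hc2 : c ^ 2 = β ^ 2 - h ^ 2) (ε : ℝ) :
    ∫ x in -ε..ε, resonanceIntegrand α β h δ x =
      -(4 * h / (α * c)) * arctan (α * ε / (δ * c)) := by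
  simp_rw [resonanceIntegrand_eq_mul_inv hδ hc hc2, intervalIntegral.integral_const_mul,
    integral_inv_sq_mul_sq_add_sq hα (mul_ne_zero hδ hc), mul_neg, neg_div, arctan_neg]
  field_simp
  ring

end

theorem sqrt_one_sub_div_sq {β : ℝ} (hβ : 0 < β) (h : ℝ) :
    √(1 - (h / β) ^ 2) = √(β ^ 2 - h ^ 2) / β := by
  rw [show 1 - (h / β) ^ 2 = (β ^ 2 - h ^ 2) / β ^ 2 by field_simp, sqrt_div' _ (sq_nonneg β),
    sqrt_sq hβ.le]

/-- As `δ → 0⁺`, the normalized resonance integral near the Dirac point converges to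
`−(1/(β*α*))·h/√(1−(h/β*)²)`. -/
theorem resonance_integral_limit (αs βs : ℝ) (hα : 0 < αs) (hβ : 0 < βs)
    (h : ℝ) (hh : |h| < βs) :
    Tendsto
      (fun δ : ℝ =>
        (1 / (2 * π)) *
          ∫ p in (π - δ ^ ((1 : ℝ) / 3))..(π + δ ^ ((1 : ℝ) / 3)),
            (1 / (δ * h - Real.sqrt (δ ^ 2 * βs ^ 2 + αs ^ 2 * (p - π) ^ 2)) +
              1 / (δ * h + Real.sqrt (δ ^ 2 * βs ^ 2 + αs ^ 2 * (p - π) ^ 2))))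
      (nhdsWithin 0 (Set.Ioi 0))
      (nhds (-(1 / (βs * αs)) * h / Real.sqrt (1 - (h / βs) ^ 2))) := by
  have hgap : 0 < βs ^ 2 - h ^ 2 := sub_pos.2 (sq_lt_sq' (abs_lt.1 hh).1 (abs_lt.1 hh).2)
  set c := √(βs ^ 2 - h ^ 2)
  have hc : 0 < c := sqrt_pos.2 hgap
  have hc2 : c ^ 2 = βs ^ 2 - h ^ 2 := sq_sqrt hgap.le
  have closed_form : ∀ δ ∈ Set.Ioi (0 : ℝ),
      -(2 * h / (π * αs * c)) * arctan (αs * δ ^ ((1 : ℝ) / 3) / (δ * c)) =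
        (1 / (2 * π)) * ∫ p in (π - δ ^ ((1 : ℝ) / 3))..(π + δ ^ ((1 : ℝ) / 3)),
          resonanceIntegrand αs βs h δ (p - π) := by
    intro δ hδ
    rw [intervalIntegral.integral_comp_sub_right, sub_sub_cancel_left, add_sub_cancel_left,
      integral_resonanceIntegrand hα.ne' (ne_of_gt hδ) hc.ne' hc2]
    field_simp
    ring
  have harctan : Tendsto (fun δ : ℝ => arctan (αs * δ ^ ((1 : ℝ) / 3) / (δ * c)))
      (𝓝[>] 0) (𝓝 (π / 2)) := by
    refine tendsto_arctan_atTop.mono_right nhdsWithin_le_nhds |>.comp ?_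
    refine ((tendsto_rpow_div_self_nhdsGT_zero (r := 1 / 3) (by norm_num)).const_mul_atTop
      (div_pos hα hc)).congr fun δ => ?_
    ring
  rw [sqrt_one_sub_div_sq hβ,
    show -(1 / (βs * αs)) * h / (c / βs) = -(2 * h / (π * αs * c)) * (π / 2) by field_simp]
  exact (harctan.const_mul _).congr' (eventuallyEq_of_mem self_mem_nhdsWithin closed_form)
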